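/- Let g : ℝ → ℝ be 2π-periodic, continuously differentiable with Lipschitz continuous derivative, and satisfy g(θ+π) = −g(θ) for all θ ∈ ℝ. Then there exists δ₀ > 0 such that for every δ with 0 < δ ≤ δ₀, the function h(θ) = 1/2 + δ g(θ) is the support function of a convex body of constant width 1, namely of K = ⋂_{θ∈ℝ} {x ∈ ℝ² : x·u(θ) ≤ h(θ)}. -/

import Mathlib

/-!
The candidate boundary point of the body in direction `θ` is
`x(θ) = h(θ) u(θ) + h'(θ) u(θ + π/2)`, and everything reduces to showing that `x(θ)` lies in every
half-plane `⟪·, u φ⟫ ≤ h φ`, i.e. that `F(φ) = h(φ) - h(θ) cos(φ - θ) - h'(θ) sin(φ - θ)` is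
minimal at `φ = θ`. Its derivative is `h'(φ) - h'(θ) cos(φ - θ) + h(θ) sin(φ - θ)`. Since `h'` is
Lipschitz and `h'(θ + π) = -h'(θ)`, the first part is `O(δ) · sin(φ - θ)` on `[θ - π, θ + π]`,
so for small `δ` it is dominated by `h(θ) sin(φ - θ) ≈ ½ sin(φ - θ)`: `F` decreases and then
increases over a period. Antiperiodicity also bounds `g'` and `g` by the Lipschitz constant
alone, since an antiperiodic function vanishes somewhere in every half period.
-/

open Real

/-- The direction vector `u θ = (cos θ, sin θ)` in the Euclidean plane. -/
noncomputable def u (θ : ℝ) : EuclideanSpace ℝ (Fin 2) := !₂[Real.cos θ, Real.sin θ]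

/-- `h` is the support function of `K`: for every direction `θ`,
`h θ` is the maximum of `x · u θ` over `x ∈ K`. -/
def IsSupportFn (K : Set (EuclideanSpace ℝ (Fin 2))) (h : ℝ → ℝ) : Prop :=
  ∀ θ : ℝ, IsGreatest ((fun x => (inner ℝ x (u θ) : ℝ)) '' K) (h θ)

open Function Set

theorem Function.Antiperiodic.abs_le_of_lipschitzWith {G : ℝ → ℝ} {c : ℝ} {L : NNReal}
    (hA : Antiperiodic G c) (hG : LipschitzWith L G) (hc : 0 ≤ c) (x : ℝ) :
    |G x| ≤ L * c / 2 := by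
  obtain ⟨t, ht, hGt⟩ : ∃ t ∈ Icc x (x + c), G t = 0 := by
    have hzero : (0 : ℝ) ∈ uIcc (G x) (G (x + c)) := by
      rw [hA x, mem_uIcc]
      rcases le_total 0 (G x) with h | h
      · exact Or.inr ⟨by linarith, h⟩
      · exact Or.inl ⟨h, by linarith⟩
    simpa [uIcc_of_le (by linarith : x ≤ x + c)] using
      intermediate_value_uIcc hG.continuous.continuousOn hzero
  have hleft : |G x| ≤ L * (t - x) := by
    simpa [hGt, Real.dist_eq, abs_of_nonpos (by linarith [ht.1] : x - t ≤ 0)] using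
      hG.dist_le_mul x t
  have hright : |G x| ≤ L * (x + c - t) := by
    simpa [hA x, hGt, Real.dist_eq, abs_of_nonneg (by linarith [ht.2] : 0 ≤ x + c - t)] using
      hG.dist_le_mul (x + c) t
  linarith

theorem Function.Antiperiodic.deriv {𝕜 F : Type*} [NontriviallyNormedField 𝕜]
    [NormedAddCommGroup F] [NormedSpace 𝕜 F] {f : 𝕜 → F} {c : 𝕜} (h : Antiperiodic f c) :
    Antiperiodic (deriv f) c := by
  intro x
  rw [← deriv_comp_add_const, h.funext, deriv.neg]

theorem abs_sub_mul_cos_le_of_le_pi_div_two {G : ℝ → ℝ} {L : NNReal} (hG : LipschitzWith L G)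
    {s : ℝ} (hs₀ : 0 ≤ s) (hs : s ≤ π / 2) :
    |G s - G 0 * cos s| ≤ (L + |G 0| * π / 4) * (π / 2) * sin s := by
  have hlip : |G s - G 0| ≤ L * s := by
    simpa [Real.dist_eq, abs_of_nonneg hs₀] using hG.dist_le_mul s 0
  have hcos₀ : 0 ≤ 1 - cos s := by linarith [cos_le_one s]
  have hcos : 1 - cos s ≤ π / 4 * s := by
    nlinarith [one_sub_sq_div_two_le_cos (x := s)]
  have hcurv : |G 0 * (1 - cos s)| ≤ |G 0| * (π / 4 * s) := by
    rw [abs_mul, abs_of_nonneg hcos₀]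
    exact mul_le_mul_of_nonneg_left hcos (abs_nonneg _)
  have hjordan : s ≤ π / 2 * sin s := by
    have := mul_le_sin hs₀ hs
    rw [div_mul_eq_mul_div, div_le_iff₀ pi_pos] at this
    linarith
  calc |G s - G 0 * cos s| = |(G s - G 0) + G 0 * (1 - cos s)| := by ring_nf
    _ ≤ L * s + |G 0| * (π / 4 * s) := (abs_add_le _ _).trans (add_le_add hlip hcurv)
    _ = (L + |G 0| * π / 4) * s := by ring
    _ ≤ (L + |G 0| * π / 4) * (π / 2 * sin s) := by gcongr
    _ = _ := by ring

theorem abs_sub_mul_cos_le {G : ℝ → ℝ} {L : NNReal} (hG : LipschitzWith L G)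
    (hπ : G π = -G 0) {s : ℝ} (hs₀ : 0 ≤ s) (hs : s ≤ π) :
    |G s - G 0 * cos s| ≤ (L + |G 0| * π / 4) * (π / 2) * sin s := by
  rcases le_total s (π / 2) with hle | hge
  · exact abs_sub_mul_cos_le_of_le_pi_div_two hG hs₀ hle
  · -- reflect through `π / 2`
    have hG' : LipschitzWith L (fun t => G (π - t)) := by
      simpa [Function.comp_def, ← sub_eq_add_neg] using
        hG.comp ((isometry_add_left π).comp isometry_neg).lipschitz
    have := abs_sub_mul_cos_le_of_le_pi_div_two hG' (s := π - s) (by linarith) (by linarith)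
    simpa [hπ, cos_pi_sub, sin_pi_sub, abs_neg] using this

theorem Function.Periodic.isMinOn_of_deriv_nonneg_of_deriv_nonpos {F : ℝ → ℝ} {c θ : ℝ}
    (hF : Periodic F (2 * c)) (hc : 0 < c) (hd : Differentiable ℝ F)
    (hright : ∀ x ∈ Icc θ (θ + c), 0 ≤ deriv F x) (hleft : ∀ x ∈ Icc (θ - c) θ, deriv F x ≤ 0) :
    IsMinOn F univ θ := by
  have hmono : MonotoneOn F (Icc θ (θ + c)) :=
    monotoneOn_of_deriv_nonneg (convex_Icc _ _) hd.continuous.continuousOn hd.differentiableOn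
      fun x hx => hright x (interior_subset hx)
  have hanti : AntitoneOn F (Icc (θ - c) θ) :=
    antitoneOn_of_deriv_nonpos (convex_Icc _ _) hd.continuous.continuousOn hd.differentiableOn
      fun x hx => hleft x (interior_subset hx)
  intro φ _
  obtain ⟨ψ, hψ, hφψ⟩ := hF.exists_mem_Ico (by positivity) φ (θ - c)
  show F θ ≤ F φ
  rw [hφψ]
  rcases le_total θ ψ with h | h
  · exact hmono ⟨le_rfl, by linarith⟩ ⟨h, by linarith [hψ.2]⟩ h
  · exact hanti ⟨hψ.1, h⟩ ⟨by linarith, le_rfl⟩ h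

theorem abs_sub_mul_cos_le_mul_sin {G : ℝ → ℝ} {L : NNReal} {b : ℝ} (hG : LipschitzWith L G)
    (hπ : G π = -G 0) (hb : (L + |G 0| * π / 4) * (π / 2) ≤ b) {s : ℝ} (hs₀ : 0 ≤ s)
    (hs : s ≤ π) : |G s - G 0 * cos s| ≤ b * sin s :=
  (abs_sub_mul_cos_le hG hπ hs₀ hs).trans <|
    mul_le_mul_of_nonneg_right hb (sin_nonneg_of_nonneg_of_le_pi hs₀ hs)

theorem hasDerivAt_sub_mul_cos_sub_mul_sin {h : ℝ → ℝ} {x : ℝ} (hd : DifferentiableAt ℝ h x)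
    (a b θ : ℝ) :
    HasDerivAt (fun x => h x - a * cos (x - θ) - b * sin (x - θ))
      (deriv h x + a * sin (x - θ) - b * cos (x - θ)) x := by
  have hsub : HasDerivAt (fun x => x - θ) 1 x := (hasDerivAt_id' x).sub_const θ
  have := (hd.hasDerivAt.sub (hsub.cos.const_mul a)).sub (hsub.sin.const_mul b)
  exact this.congr_deriv (by ring)

theorem mul_cos_add_deriv_mul_sin_le {h : ℝ → ℝ} {K : NNReal} (hd : Differentiable ℝ h)
    (hper : Periodic h (2 * π)) (hK : LipschitzWith K (deriv h))
    (hA : Antiperiodic (deriv h) π)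
    (hsmall : ∀ θ, (K + |deriv h θ| * π / 4) * (π / 2) ≤ h θ) (θ φ : ℝ) :
    h θ * cos (φ - θ) + deriv h θ * sin (φ - θ) ≤ h φ := by
  set F : ℝ → ℝ := fun x => h x - h θ * cos (x - θ) - deriv h θ * sin (x - θ) with hF
  have hF' (x : ℝ) := hasDerivAt_sub_mul_cos_sub_mul_sin (hd x) (h θ) (deriv h θ) θ
  have hFper : Periodic F (2 * π) := fun x => by
    simp only [hF, hper x, show x + 2 * π - θ = x - θ + 2 * π by ring, cos_add_two_pi,
      sin_add_two_pi]
  have hmin : IsMinOn F univ θ := by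
    refine hFper.isMinOn_of_deriv_nonneg_of_deriv_nonpos pi_pos
      (fun x => (hF' x).differentiableAt) (fun x hx => ?_) (fun x hx => ?_)
    · have hG : LipschitzWith K (fun t => deriv h (θ + t)) := by
        simpa [Function.comp_def] using hK.comp (isometry_add_left θ).lipschitz
      have := abs_sub_mul_cos_le_mul_sin hG (by simp [hA θ]) (by simpa using hsmall θ)
        (s := x - θ) (by linarith [hx.1]) (by linarith [hx.2])
      rw [(hF' x).deriv]
      simp only [add_zero, add_sub_cancel] at this
      linarith [(abs_le.mp this).1]
    · have hG : LipschitzWith K (fun t => deriv h (θ - t)) := by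
        simpa [Function.comp_def, ← sub_eq_add_neg] using
          hK.comp ((isometry_add_left θ).comp isometry_neg).lipschitz
      have hGπ : deriv h (θ - π) = -deriv h (θ - 0) := by
        rw [sub_zero, ← sub_add_cancel θ π, hA, neg_neg, sub_add_cancel]
      have := abs_sub_mul_cos_le_mul_sin hG hGπ (by simpa using hsmall θ)
        (s := θ - x) (by linarith [hx.2]) (by linarith [hx.1])
      rw [(hF' x).deriv, show x - θ = -(θ - x) by ring, sin_neg, cos_neg]
      simp only [sub_zero, sub_sub_cancel] at this
      linarith [(abs_le.mp this).2]
  have := hmin (mem_univ φ)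
  simp only [hF, sub_self, cos_zero, mul_one, sin_zero, mul_zero, sub_nonneg, mem_ofPred_eq]
    at this
  linarith

theorem inner_u (x : EuclideanSpace ℝ (Fin 2)) (θ : ℝ) :
    (inner ℝ x (u θ) : ℝ) = x 0 * cos θ + x 1 * sin θ := by
  simp only [u, PiLp.inner_apply, RCLike.inner_apply, ringHom_apply, Fin.sum_univ_two,
    Matrix.cons_val_zero, Matrix.cons_val_one, Matrix.cons_val_fin_one]
  ring

theorem inner_u_u (θ φ : ℝ) : (inner ℝ (u θ) (u φ) : ℝ) = cos (φ - θ) := by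
  rw [inner_u, cos_sub]
  simp only [u, Matrix.cons_val_zero, Matrix.cons_val_one, Matrix.cons_val_fin_one]
  ring

theorem norm_le_of_forall_inner_u_le {x : EuclideanSpace ℝ (Fin 2)} {M : ℝ}
    (hx : ∀ θ, (inner ℝ x (u θ) : ℝ) ≤ M) : ‖x‖ ≤ M := by
  set z : ℂ := ⟨x 0, x 1⟩
  have hnorm : ‖x‖ = ‖z‖ := by
    simp [EuclideanSpace.norm_eq, Complex.norm_eq_sqrt_sq_add_sq, Fin.sum_univ_two, z]
  rcases eq_or_ne z 0 with hz | hz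
  · have h₀ := hx 0
    have hπ := hx π
    simp only [inner_u, cos_zero, sin_zero, cos_pi, sin_pi] at h₀ hπ
    rw [hnorm, hz, norm_zero]
    linarith
  · -- the direction of `x` is `u (arg z)`
    have h := hx (Complex.arg z)
    rw [inner_u, Complex.cos_arg hz, Complex.sin_arg] at h
    have hdir : x 0 * (z.re / ‖z‖) + x 1 * (z.im / ‖z‖) = ‖z‖ := by
      field_simp
      rw [Complex.sq_norm, Complex.normSq_apply]
    rwa [hnorm, ← hdir]

def supportBody (h : ℝ → ℝ) : Set (EuclideanSpace ℝ (Fin 2)) :=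
  ⋂ θ : ℝ, {x | (inner ℝ x (u θ) : ℝ) ≤ h θ}

theorem convex_supportBody (h : ℝ → ℝ) : Convex ℝ (supportBody h) :=
  convex_iInter fun _ => convex_halfSpace_le
    ⟨fun a b => inner_add_left a b _, fun r a => real_inner_smul_left a _ r⟩ _

theorem isClosed_supportBody (h : ℝ → ℝ) : IsClosed (supportBody h) :=
  isClosed_iInter fun _ => isClosed_le (continuous_id.inner continuous_const) continuous_const

theorem isCompact_supportBody {h : ℝ → ℝ} {M : ℝ} (hM : ∀ θ, h θ ≤ M) :
    IsCompact (supportBody h) :=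
  (isCompact_closedBall 0 M).of_isClosed_subset (isClosed_supportBody h) fun _ hx =>
    mem_closedBall_zero_iff.mpr <| norm_le_of_forall_inner_u_le fun θ =>
      (mem_iInter.mp hx θ).trans (hM θ)

theorem isSupportFn_supportBody {h : ℝ → ℝ}
    (htouch : ∀ θ, ∃ p ∈ supportBody h, (inner ℝ p (u θ) : ℝ) = h θ) :
    IsSupportFn (supportBody h) h := fun θ =>
  ⟨htouch θ, by rintro _ ⟨x, hx, rfl⟩; exact mem_iInter.mp hx θ⟩

noncomputable def supportPoint (h : ℝ → ℝ) (θ : ℝ) : EuclideanSpace ℝ (Fin 2) :=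
  h θ • u θ + deriv h θ • u (θ + π / 2)

theorem inner_supportPoint_u (h : ℝ → ℝ) (θ φ : ℝ) :
    (inner ℝ (supportPoint h θ) (u φ) : ℝ) = h θ * cos (φ - θ) + deriv h θ * sin (φ - θ) := by
  rw [supportPoint, inner_add_left, real_inner_smul_left, real_inner_smul_left, inner_u_u,
    inner_u_u, ← cos_sub_pi_div_two (φ - θ), sub_sub]

theorem supportPoint_mem_supportBody {h : ℝ → ℝ} {K : NNReal} (hd : Differentiable ℝ h)
    (hper : Periodic h (2 * π)) (hK : LipschitzWith K (deriv h))
    (hA : Antiperiodic (deriv h) π)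
    (hsmall : ∀ θ, (K + |deriv h θ| * π / 4) * (π / 2) ≤ h θ) (θ : ℝ) :
    supportPoint h θ ∈ supportBody h :=
  mem_iInter.mpr fun φ => by
    rw [mem_ofPred_eq, inner_supportPoint_u]
    exact mul_cos_add_deriv_mul_sin_le hd hper hK hA hsmall θ φ

section Perturbation

variable {g : ℝ → ℝ} {L : NNReal}

theorem abs_deriv_le_and_abs_le_of_antiperiodic (hg : Differentiable ℝ g)
    (hL : LipschitzWith L (deriv g)) (hA : Antiperiodic g π) (x : ℝ) :
    |deriv g x| ≤ L * π / 2 ∧ |g x| ≤ L * π ^ 2 / 4 := by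
  have hderiv : ∀ x, |deriv g x| ≤ L * π / 2 := hA.deriv.abs_le_of_lipschitzWith hL pi_pos.le
  have hg' : LipschitzWith (L * NNReal.pi / 2) g :=
    lipschitzWith_of_nnnorm_deriv_le hg fun x => by
      rw [← NNReal.coe_le_coe]
      simpa using hderiv x
  refine ⟨hderiv x, ?_⟩
  have := hA.abs_le_of_lipschitzWith hg' pi_pos.le x
  push_cast [NNReal.coe_real_pi] at this
  linarith

theorem lipschitz_bound_le_half_add_mul (hg : Differentiable ℝ g)
    (hL : LipschitzWith L (deriv g)) (hA : Antiperiodic g π) {δ : ℝ} (hδ : 0 < δ)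
    (hδ₀ : δ ≤ 1 / (20 * L + 1)) (θ : ℝ) :
    ((‖δ‖₊ * L : NNReal) + |δ * deriv g θ| * π / 4) * (π / 2) ≤ 1 / 2 + δ * g θ := by
  obtain ⟨hg'θ, hgθ⟩ := abs_deriv_le_and_abs_le_of_antiperiodic hg hL hA θ
  have hδL : δ * L ≤ 1 / 20 := by
    rw [le_div_iff₀ (by positivity)] at hδ₀
    linarith
  have hcoe : ((‖δ‖₊ * L : NNReal) : ℝ) = δ * L := by simp [abs_of_pos hδ]
  have hslope : |δ * deriv g θ| ≤ δ * L * π / 2 := by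
    rw [abs_mul, abs_of_pos hδ, mul_assoc, mul_div_assoc]
    exact mul_le_mul_of_nonneg_left hg'θ hδ.le
  have hheight : -(δ * L * π ^ 2 / 4) ≤ δ * g θ := by
    have := mul_le_mul_of_nonneg_left (neg_le_of_abs_le hgθ) hδ.le
    linarith
  have hπ2 : π ^ 2 ≤ 16 := by nlinarith [pi_pos, pi_lt_four]
  have hπ3 : π / 2 + π ^ 3 / 16 ≤ 6 := by nlinarith [pi_pos, pi_lt_four]
  calc ((‖δ‖₊ * L : NNReal) + |δ * deriv g θ| * π / 4) * (π / 2)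
      ≤ (δ * L + δ * L * π / 2 * π / 4) * (π / 2) := by rw [hcoe]; gcongr
    _ = δ * L * (π / 2 + π ^ 3 / 16) := by ring
    _ ≤ 1 / 2 - δ * L * π ^ 2 / 4 := by nlinarith
    _ ≤ 1 / 2 + δ * g θ := by linarith

theorem supportPoint_half_add_mul_mem_supportBody (hg : Differentiable ℝ g)
    (hL : LipschitzWith L (deriv g)) (hA : Antiperiodic g π) {δ : ℝ} (hδ : 0 < δ)
    (hδ₀ : δ ≤ 1 / (20 * L + 1)) (θ : ℝ) :
    supportPoint (fun θ => 1 / 2 + δ * g θ) θ ∈ supportBody (fun θ => 1 / 2 + δ * g θ) := by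
  have hderiv : deriv (fun θ => 1 / 2 + δ * g θ) = fun θ => δ * deriv g θ :=
    funext fun θ => by simp [deriv_const_mul _ (hg θ)]
  refine supportPoint_mem_supportBody (K := ‖δ‖₊ * L) ((hg.const_mul δ).const_add _)
    (fun x => by simp only [hA.periodic_two_mul x]) ?_ ?_ ?_ θ
  · rw [hderiv]
    exact (lipschitzWith_smul δ).comp hL
  · rw [hderiv]
    intro x
    simp only [hA.deriv x, mul_neg]
  · rw [hderiv]
    exact lipschitz_bound_le_half_add_mul hg hL hA hδ hδ₀

theorem half_add_mul_le_one (hg : Differentiable ℝ g)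
    (hL : LipschitzWith L (deriv g)) (hA : Antiperiodic g π) {δ : ℝ} (hδ : 0 < δ)
    (hδ₀ : δ ≤ 1 / (20 * L + 1)) (θ : ℝ) : 1 / 2 + δ * g θ ≤ 1 := by
  -- `1 / 2 + δ * g θ = 1 - (1 / 2 + δ * g (θ + π))`, and the latter support value is nonnegative
  have hsmall := lipschitz_bound_le_half_add_mul hg hL hA hδ hδ₀ (θ + π)
  rw [hA θ] at hsmall
  have : 0 ≤ ((‖δ‖₊ * L : NNReal) + |δ * deriv g (θ + π)| * π / 4) * (π / 2) := by positivity
  linarith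

end Perturbation

theorem perturbation_of_circle_general (g : ℝ → ℝ)
    (hC1 : ContDiff ℝ 1 g)
    (hlip : ∃ L : NNReal, LipschitzWith L (deriv g))
    (hodd : ∀ θ : ℝ, g (θ + π) = -g θ) :
    ∃ δ₀ : ℝ, 0 < δ₀ ∧ ∀ δ : ℝ, 0 < δ → δ ≤ δ₀ →
      (⋂ θ : ℝ, {x : EuclideanSpace ℝ (Fin 2) | (inner ℝ x (u θ) : ℝ) ≤ 1/2 + δ * g θ}).Nonempty ∧
      IsCompact (⋂ θ : ℝ, {x : EuclideanSpace ℝ (Fin 2) | (inner ℝ x (u θ) : ℝ) ≤ 1/2 + δ * g θ}) ∧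
      Convex ℝ (⋂ θ : ℝ, {x : EuclideanSpace ℝ (Fin 2) | (inner ℝ x (u θ) : ℝ) ≤ 1/2 + δ * g θ}) ∧
      IsSupportFn (⋂ θ : ℝ, {x : EuclideanSpace ℝ (Fin 2) | (inner ℝ x (u θ) : ℝ) ≤ 1/2 + δ * g θ})
        (fun θ => 1/2 + δ * g θ) ∧
      (∀ θ : ℝ, (1/2 + δ * g θ) + (1/2 + δ * g (θ + π)) = 1) := by
  obtain ⟨L, hL⟩ := hlip
  have hg : Differentiable ℝ g := hC1.differentiable one_ne_zero
  refine ⟨1 / (20 * L + 1), by positivity, fun δ hδ hδ₀ => ?_⟩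
  have hmem := supportPoint_half_add_mul_mem_supportBody hg hL hodd hδ hδ₀
  refine ⟨⟨_, hmem 0⟩, isCompact_supportBody (half_add_mul_le_one hg hL hodd hδ hδ₀),
    convex_supportBody _, isSupportFn_supportBody fun θ => ⟨_, hmem θ, ?_⟩,
    fun θ => by rw [hodd θ]; ring⟩
  simp [inner_supportPoint_u]

/-- Perturbation of a circle: if `g ∈ C^{1,1}(S¹)` satisfies `g(θ+π) = −g(θ)`, then for
all sufficiently small `δ > 0` the function `h = 1/2 + δ g` is the support function of a
convex body of constant width 1, namely `K = ⋂_θ {x : x · u(θ) ≤ h(θ)}`. -/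
theorem perturbation_of_circle (g : ℝ → ℝ)
    (hper : Function.Periodic g (2 * π)) (hC1 : ContDiff ℝ 1 g)
    (hlip : ∃ L : NNReal, LipschitzWith L (deriv g))
    (hodd : ∀ θ : ℝ, g (θ + π) = -g θ) :
    ∃ δ₀ : ℝ, 0 < δ₀ ∧ ∀ δ : ℝ, 0 < δ → δ ≤ δ₀ →
      (⋂ θ : ℝ, {x : EuclideanSpace ℝ (Fin 2) | (inner ℝ x (u θ) : ℝ) ≤ 1/2 + δ * g θ}).Nonempty ∧
      IsCompact (⋂ θ : ℝ, {x : EuclideanSpace ℝ (Fin 2) | (inner ℝ x (u θ) : ℝ) ≤ 1/2 + δ * g θ}) ∧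
      Convex ℝ (⋂ θ : ℝ, {x : EuclideanSpace ℝ (Fin 2) | (inner ℝ x (u θ) : ℝ) ≤ 1/2 + δ * g θ}) ∧
      IsSupportFn (⋂ θ : ℝ, {x : EuclideanSpace ℝ (Fin 2) | (inner ℝ x (u θ) : ℝ) ≤ 1/2 + δ * g θ})
        (fun θ => 1/2 + δ * g θ) ∧
      (∀ θ : ℝ, (1/2 + δ * g θ) + (1/2 + δ * g (θ + π)) = 1) :=
  perturbation_of_circle_general g hC1 hlip hodd
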